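/- Let G ⊂ ℝⁿ (n ≥ 1) be a convex body containing the closed ball of radius r > 0 centered at the origin, let u ∈ 𝕊ⁿ⁻¹ be a unit vector, and let 0 < d ≤ diam(G). Then Vol(C_G(u,d)) ≥ (ω_{n−1}/n) · (r/diam(G))^{2n−1} · dⁿ, where ω_{n−1} is the Lebesgue measure of the closed unit ball in ℝⁿ⁻¹ and diam(G) := sup{|x − y| : x, y ∈ G}. -/

import Mathlib

/-!
Let `p` maximize `⟪u, ·⟫` on `G`. By convexity the homothety with centre `p` and ratio
`d / diam G` maps `G` into itself, and it shrinks the width of `G` in direction `u` (at most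
`diam G`) to at most `d`, so it maps `G` into the cap. Hence
`Vol(C_G(u,d)) ≥ (d / diam G)ⁿ Vol(G) ≥ (d / diam G)ⁿ rⁿ ωₙ`. The cylinder
`[-1/2, 1/2] × B_{n-1}(1/2)` inside the unit ball gives `ωₙ ≥ 2^{1-n} ω_{n-1}`, and
`2r ≤ diam G` turns `2^{1-n}` into `(r / diam G)^{n-1}`.
-/

open MeasureTheory Metric Pointwise
open scoped RealInnerProductSpace

/-- Support function `h_G(u) = sup_{x ∈ G} ⟪u, x⟫`. -/
noncomputable def suppFn {n : ℕ} (G : Set (EuclideanSpace ℝ (Fin n)))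
    (u : EuclideanSpace ℝ (Fin n)) : ℝ :=
  sSup ((fun x => ⟪u, x⟫) '' G)

/-- `min_{x ∈ G} ⟪u, x⟫`. -/
noncomputable def infFn {n : ℕ} (G : Set (EuclideanSpace ℝ (Fin n)))
    (u : EuclideanSpace ℝ (Fin n)) : ℝ :=
  sInf ((fun x => ⟪u, x⟫) '' G)

/-- The cap of `G` in direction `u` with height `h`:
`C_G(u,h) = {x ∈ G : ⟪u, x⟫ ≥ h_G(u) − h}`. -/
noncomputable def capG {n : ℕ} (G : Set (EuclideanSpace ℝ (Fin n)))
    (u : EuclideanSpace ℝ (Fin n)) (h : ℝ) : Set (EuclideanSpace ℝ (Fin n)) :=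
  {x ∈ G | suppFn G u - h ≤ ⟪u, x⟫}

lemma EuclideanSpace.norm_sq_eq_sq_zero_add_norm_sq_tail {m : ℕ}
    (x : EuclideanSpace ℝ (Fin (m + 1))) :
    ‖x‖ ^ 2 = x 0 ^ 2 + ‖(WithLp.toLp 2 (fun j : Fin m => x j.succ))‖ ^ 2 := by
  simp only [EuclideanSpace.norm_sq_eq, Fin.sum_univ_succ, Real.norm_eq_abs, sq_abs]

lemma half_pow_mul_volume_closedBall_le_volume_closedBall_succ (m : ℕ) :
    ENNReal.ofReal ((1 / 2) ^ m) * volume (closedBall (0 : EuclideanSpace ℝ (Fin m)) 1)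
      ≤ volume (closedBall (0 : EuclideanSpace ℝ (Fin (m + 1))) 1) := by
  set em := (MeasurableEquiv.toLp 2 (Fin m → ℝ)).symm
  set en := (MeasurableEquiv.toLp 2 (Fin (m + 1) → ℝ)).symm
  set π := MeasurableEquiv.piFinSuccAbove (fun _ : Fin (m + 1) => ℝ) 0
  set cyl : Set (ℝ × (Fin m → ℝ)) :=
    Set.Icc (-(1 / 2)) (1 / 2) ×ˢ (em.symm ⁻¹' closedBall 0 (1 / 2))
  have hcyl : MeasurableSet cyl :=
    measurableSet_Icc.prod (em.symm.measurable measurableSet_closedBall)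
  have hvol_cyl : volume (en ⁻¹' (π ⁻¹' cyl))
      = ENNReal.ofReal ((1 / 2) ^ m) * volume (closedBall (0 : EuclideanSpace ℝ (Fin m)) 1) := by
    rw [(EuclideanSpace.volume_preserving_symm_measurableEquiv_toLp (Fin (m + 1))).measure_preimage
        (π.measurable hcyl).nullMeasurableSet,
      (volume_preserving_piFinSuccAbove (fun _ : Fin (m + 1) => ℝ) 0).measure_preimage
        hcyl.nullMeasurableSet,
      Measure.volume_eq_prod, Measure.prod_prod, Real.volume_Icc,
      (EuclideanSpace.volume_preserving_symm_measurableEquiv_toLp (Fin m)).symm.measure_preimage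
        measurableSet_closedBall.nullMeasurableSet,
      Measure.addHaar_closedBall' _ _ (by norm_num), finrank_euclideanSpace_fin]
    norm_num
  have hcyl_sub : en ⁻¹' (π ⁻¹' cyl) ⊆ closedBall 0 1 := by
    rintro x ⟨hx0, hxtail⟩
    have hx0 : |x 0| ≤ 1 / 2 := abs_le.2 hx0
    change WithLp.toLp 2 (fun j : Fin m => x j.succ) ∈ closedBall 0 (1 / 2) at hxtail
    rw [mem_closedBall_zero_iff] at hxtail
    rw [mem_closedBall_zero_iff]
    have hnorm := EuclideanSpace.norm_sq_eq_sq_zero_add_norm_sq_tail x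
    nlinarith [norm_nonneg x, sq_abs (x 0), abs_nonneg (x 0),
      norm_nonneg (WithLp.toLp 2 (fun j : Fin m => x j.succ))]
  exact hvol_cyl ▸ measure_mono hcyl_sub

section Cap

variable {n : ℕ} {G : Set (EuclideanSpace ℝ (Fin n))} {u p : EuclideanSpace ℝ (Fin n)}

lemma suppFn_eq_of_isMaxOn (hp : p ∈ G) (hmax : IsMaxOn (fun x => ⟪u, x⟫) G p) :
    suppFn G u = ⟪u, p⟫ :=
  IsGreatest.csSup_eq ⟨Set.mem_image_of_mem _ hp, by rintro _ ⟨x, hx, rfl⟩; exact hmax hx⟩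

lemma homothety_image_subset_capG (hGcv : Convex ℝ G) (hGb : Bornology.IsBounded G)
    (hu : ‖u‖ = 1) (hp : p ∈ G) (hmax : IsMaxOn (fun x => ⟪u, x⟫) G p) {c d : ℝ}
    (hc₀ : 0 ≤ c) (hc₁ : c ≤ 1) (hcd : c * diam G ≤ d) :
    AffineMap.homothety p c '' G ⊆ capG G u d := by
  rintro _ ⟨x, hx, rfl⟩
  rw [AffineMap.homothety_apply, vsub_eq_sub, vadd_eq_add]
  refine ⟨?_, ?_⟩
  · convert hGcv hp hx (sub_nonneg.2 hc₁) hc₀ (by ring) using 1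
    module
  · have hwidth : ⟪u, p⟫ - ⟪u, x⟫ ≤ diam G := calc
      ⟪u, p⟫ - ⟪u, x⟫ = ⟪u, p - x⟫ := (inner_sub_right _ _ _).symm
      _ ≤ ‖u‖ * ‖p - x‖ := real_inner_le_norm _ _
      _ ≤ diam G := by rw [hu, one_mul, ← dist_eq_norm]; exact dist_le_diam_of_mem hGb hp hx
    rw [suppFn_eq_of_isMaxOn hp hmax, inner_add_right, inner_smul_right, inner_sub_right]
    linarith [mul_le_mul_of_nonneg_left hwidth hc₀]

lemma ofReal_div_diam_pow_mul_volume_le_volume_capG (hGcv : Convex ℝ G) (hGcp : IsCompact G)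
    (hu : ‖u‖ = 1) {d : ℝ} (hd : 0 < d) (hdiam : d ≤ diam G) :
    ENNReal.ofReal ((d / diam G) ^ n) * volume G ≤ volume (capG G u d) := by
  have hD : 0 < diam G := hd.trans_le hdiam
  have hGne : G.Nonempty := Set.nonempty_iff_ne_empty.2 <| by rintro rfl; simp at hD
  obtain ⟨p, hp, hmax⟩ := hGcp.exists_isMaxOn hGne (f := fun x => ⟪u, x⟫) (by fun_prop)
  calc ENNReal.ofReal ((d / diam G) ^ n) * volume G
      = volume (AffineMap.homothety p (d / diam G) '' G) := by
        rw [Measure.addHaar_image_homothety, finrank_euclideanSpace_fin,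
          abs_of_nonneg (by positivity)]
    _ ≤ volume (capG G u d) := measure_mono <|
        homothety_image_subset_capG hGcv hGcp.isBounded hu hp hmax (by positivity)
          ((div_le_one hD).2 hdiam) (div_mul_cancel₀ d hD.ne').le

lemma ofReal_pow_mul_volume_closedBall_le_volume {r : ℝ} (hr : 0 ≤ r)
    (hball : closedBall 0 r ⊆ G) :
    ENNReal.ofReal (r ^ n) * volume (closedBall (0 : EuclideanSpace ℝ (Fin n)) 1) ≤ volume G := by
  simpa only [Measure.addHaar_closedBall' _ _ hr, finrank_euclideanSpace_fin] using
    measure_mono (μ := volume) hball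

end Cap

lemma div_diam_pow_mul_pow_mul_volume_closedBall_le_volume_capG {m : ℕ}
    {G : Set (EuclideanSpace ℝ (Fin (m + 1)))} (hGcv : Convex ℝ G) (hGcp : IsCompact G)
    {r : ℝ} (hr : 0 ≤ r) (hball : closedBall 0 r ⊆ G) {u : EuclideanSpace ℝ (Fin (m + 1))}
    (hu : ‖u‖ = 1) {d : ℝ} (hd : 0 < d) (hdiam : d ≤ diam G) :
    (d / diam G) ^ (m + 1) * r ^ (m + 1) * (1 / 2) ^ m *
        (volume (closedBall (0 : EuclideanSpace ℝ (Fin m)) 1)).toReal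
      ≤ (volume (capG G u d)).toReal := by
  have hvol := calc
    ENNReal.ofReal ((d / diam G) ^ (m + 1)) * ENNReal.ofReal (r ^ (m + 1)) *
        ENNReal.ofReal ((1 / 2) ^ m) * volume (closedBall (0 : EuclideanSpace ℝ (Fin m)) 1)
      ≤ ENNReal.ofReal ((d / diam G) ^ (m + 1)) * (ENNReal.ofReal (r ^ (m + 1)) *
          volume (closedBall (0 : EuclideanSpace ℝ (Fin (m + 1))) 1)) := by
        rw [mul_assoc, mul_assoc]
        gcongr
        exact half_pow_mul_volume_closedBall_le_volume_closedBall_succ m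
    _ ≤ ENNReal.ofReal ((d / diam G) ^ (m + 1)) * volume G := by
        gcongr; exact ofReal_pow_mul_volume_closedBall_le_volume hr hball
    _ ≤ volume (capG G u d) := ofReal_div_diam_pow_mul_volume_le_volume_capG hGcv hGcp hu hd hdiam
  have hcap_finite : volume (capG G u d) ≠ ⊤ :=
    (measure_mono fun _ hx => hx.1).trans_lt hGcp.measure_lt_top |>.ne
  have hdD : 0 ≤ d / diam G := div_nonneg hd.le (hd.le.trans hdiam)
  simpa only [ENNReal.toReal_mul, ENNReal.toReal_ofReal, pow_nonneg, hdD, hr, one_div, inv_nonneg,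
    zero_le_two] using ENNReal.toReal_mono hcap_finite hvol

theorem stmt15_general {n : ℕ} (hn : 1 ≤ n) (G : Set (EuclideanSpace ℝ (Fin n)))
    (hGcv : Convex ℝ G) (hGcp : IsCompact G)
    (r : ℝ) (hr : 0 < r) (hball : closedBall (0 : EuclideanSpace ℝ (Fin n)) r ⊆ G)
    (u : EuclideanSpace ℝ (Fin n)) (hu : ‖u‖ = 1)
    (d : ℝ) (hd : 0 < d) (hdiam : d ≤ diam G) :
    (volume (closedBall (0 : EuclideanSpace ℝ (Fin (n - 1))) 1)).toReal / n *
        (r / diam G) ^ (2 * n - 1) * d ^ n ≤ (volume (capG G u d)).toReal := by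
  obtain ⟨m, rfl⟩ : ∃ m, n = m + 1 := ⟨n - 1, by omega⟩
  set ω := (volume (closedBall (0 : EuclideanSpace ℝ (Fin m)) 1)).toReal
  have hD : 0 < diam G := hd.trans_le hdiam
  have h2r : 2 * r ≤ diam G :=
    diam_closedBall_eq (0 : EuclideanSpace ℝ (Fin (m + 1))) hr.le ▸
      diam_mono hball hGcp.isBounded
  have hrD : (r / diam G) ^ m ≤ (1 / 2) ^ m :=
    pow_le_pow_left₀ (by positivity) ((div_le_iff₀ hD).2 (by linarith)) m
  calc ω / (m + 1 : ℕ) * (r / diam G) ^ (2 * (m + 1) - 1) * d ^ (m + 1)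
      = ω / (m + 1 : ℕ) * (r / diam G) ^ m * ((d / diam G) ^ (m + 1) * r ^ (m + 1)) := by
        rw [show 2 * (m + 1) - 1 = m + (m + 1) by omega]
        simp only [pow_add, div_pow]; ring
    _ ≤ ω * (1 / 2) ^ m * ((d / diam G) ^ (m + 1) * r ^ (m + 1)) := by
        gcongr; exact div_le_self ENNReal.toReal_nonneg (by simp)
    _ = (d / diam G) ^ (m + 1) * r ^ (m + 1) * (1 / 2) ^ m * ω := by ring
    _ ≤ _ := div_diam_pow_mul_pow_mul_volume_closedBall_le_volume_capG hGcv hGcp hr.le hball hu hd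
        hdiam

theorem stmt15 {n : ℕ} (hn : 1 ≤ n) (G : Set (EuclideanSpace ℝ (Fin n)))
    (hGcv : Convex ℝ G) (hGcp : IsCompact G) (hGint : (interior G).Nonempty)
    (r : ℝ) (hr : 0 < r) (hball : closedBall (0 : EuclideanSpace ℝ (Fin n)) r ⊆ G)
    (u : EuclideanSpace ℝ (Fin n)) (hu : ‖u‖ = 1)
    (d : ℝ) (hd : 0 < d) (hdiam : d ≤ diam G) :
    (volume (closedBall (0 : EuclideanSpace ℝ (Fin (n - 1))) 1)).toReal / n *
        (r / diam G) ^ (2 * n - 1) * d ^ n ≤ (volume (capG G u d)).toReal :=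
  stmt15_general hn G hGcv hGcp r hr hball u hu d hd hdiam
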